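/- Let q : ℝ → ℍ be smooth and nonvanishing and let (γ, V) be its frame-Hopf framed curve. Then the generalized Kirchhoff energy of (γ, V) satisfies ∫₀² (κ(t)² + tw(t)² + st(t)²)·‖γ′(t)‖³ dt = 4·∫₀² |q′(t)|² dt, where κ = ‖D_s²γ‖ is the curvature of γ, tw is the twist rate and st is the relative stretch rate of (γ, V). -/

import Mathlib

open scoped Quaternion

noncomputable section

/-- The quaternion `i`. -/
def qI : ℍ[ℝ] := ⟨0, 1, 0, 0⟩

/-- The quaternion `j`. -/
def qJ : ℍ[ℝ] := ⟨0, 0, 1, 0⟩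

/-- The identification of the imaginary part of a quaternion with a vector in `ℝ³`. -/
def imPart (p : ℍ[ℝ]) : EuclideanSpace ℝ (Fin 3) := WithLp.toLp 2 ![p.imI, p.imJ, p.imK]

/-- The cross product on `ℝ³`. -/
def cross3 (a b : EuclideanSpace ℝ (Fin 3)) : EuclideanSpace ℝ (Fin 3) :=
  WithLp.toLp 2 ![a 1 * b 2 - a 2 * b 1, a 2 * b 0 - a 0 * b 2, a 0 * b 1 - a 1 * b 0]

/-- The velocity `γ' = conj(q)·i·q` of the frame-Hopf base curve, as a vector in `ℝ³`. -/
def gammaDeriv (q : ℝ → ℍ[ℝ]) (t : ℝ) : EuclideanSpace ℝ (Fin 3) :=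
  imPart (star (q t) * qI * q t)

/-- The frame-Hopf framing `V = conj(q)·j·q / |q|²`, as a vector in `ℝ³`. -/
def frameV (q : ℝ → ℍ[ℝ]) (t : ℝ) : EuclideanSpace ℝ (Fin 3) :=
  (‖q t‖ ^ 2)⁻¹ • imPart (star (q t) * qJ * q t)

/-- The speed `‖γ'‖` of the frame-Hopf base curve. -/
def speed (q : ℝ → ℍ[ℝ]) (t : ℝ) : ℝ := ‖gammaDeriv q t‖

/-- The unit tangent `D_s γ = ‖γ'‖⁻¹ · γ'`. -/
def dsGamma (q : ℝ → ℍ[ℝ]) (t : ℝ) : EuclideanSpace ℝ (Fin 3) :=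
  (speed q t)⁻¹ • gammaDeriv q t

/-- The curvature vector `D_s² γ = ‖γ'‖⁻¹ · (D_s γ)'`. -/
def ds2Gamma (q : ℝ → ℍ[ℝ]) (t : ℝ) : EuclideanSpace ℝ (Fin 3) :=
  (speed q t)⁻¹ • deriv (dsGamma q) t

/-- The curvature `κ = ‖D_s²γ‖` of the base curve. -/
def kappa (q : ℝ → ℍ[ℝ]) (t : ℝ) : ℝ := ‖ds2Gamma q t‖

/-- The twist rate `tw = ⟨D_s V, D_s γ × V⟩`. -/
def twistRate (q : ℝ → ℍ[ℝ]) (t : ℝ) : ℝ :=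
  inner ℝ ((speed q t)⁻¹ • deriv (frameV q) t) (cross3 (dsGamma q t) (frameV q t))

/-- The relative stretch rate `st = ‖γ'‖⁻¹ · D_s‖γ'‖`. -/
def stretchRate (q : ℝ → ℍ[ℝ]) (t : ℝ) : ℝ :=
  (speed q t)⁻¹ * ((speed q t)⁻¹ * deriv (speed q) t)

/-! ### Auxiliary machinery -/

/-- A vector in `ℝ³` with pinned Euclidean instances. -/
def vec3 (x y z : ℝ) : EuclideanSpace ℝ (Fin 3) := WithLp.toLp 2 ![x, y, z]

@[simp] lemma vec3_zero (x y z : ℝ) : vec3 x y z 0 = x := rfl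
@[simp] lemma vec3_one (x y z : ℝ) : vec3 x y z 1 = y := rfl
@[simp] lemma vec3_two (x y z : ℝ) : vec3 x y z 2 = z := rfl

@[simp] lemma qI_re : qI.re = 0 := rfl
@[simp] lemma qI_imI : qI.imI = 1 := rfl
@[simp] lemma qI_imJ : qI.imJ = 0 := rfl
@[simp] lemma qI_imK : qI.imK = 0 := rfl
@[simp] lemma qJ_re : qJ.re = 0 := rfl
@[simp] lemma qJ_imI : qJ.imI = 0 := rfl
@[simp] lemma qJ_imJ : qJ.imJ = 1 := rfl
@[simp] lemma qJ_imK : qJ.imK = 0 := rfl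

def reCLM : ℍ[ℝ] →L[ℝ] ℝ := ⟨QuaternionAlgebra.reₗ _ _ _, Quaternion.continuous_re⟩
def imICLM : ℍ[ℝ] →L[ℝ] ℝ := ⟨QuaternionAlgebra.imIₗ _ _ _, Quaternion.continuous_imI⟩
def imJCLM : ℍ[ℝ] →L[ℝ] ℝ := ⟨QuaternionAlgebra.imJₗ _ _ _, Quaternion.continuous_imJ⟩
def imKCLM : ℍ[ℝ] →L[ℝ] ℝ := ⟨QuaternionAlgebra.imKₗ _ _ _, Quaternion.continuous_imK⟩

lemma hasDerivAt_re {q : ℝ → ℍ[ℝ]} {p : ℍ[ℝ]} {t : ℝ} (h : HasDerivAt q p t) :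
    HasDerivAt (fun s => (q s).re) p.re t := reCLM.hasFDerivAt.comp_hasDerivAt t h
lemma hasDerivAt_imI {q : ℝ → ℍ[ℝ]} {p : ℍ[ℝ]} {t : ℝ} (h : HasDerivAt q p t) :
    HasDerivAt (fun s => (q s).imI) p.imI t := imICLM.hasFDerivAt.comp_hasDerivAt t h
lemma hasDerivAt_imJ {q : ℝ → ℍ[ℝ]} {p : ℍ[ℝ]} {t : ℝ} (h : HasDerivAt q p t) :
    HasDerivAt (fun s => (q s).imJ) p.imJ t := imJCLM.hasFDerivAt.comp_hasDerivAt t h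
lemma hasDerivAt_imK {q : ℝ → ℍ[ℝ]} {p : ℍ[ℝ]} {t : ℝ} (h : HasDerivAt q p t) :
    HasDerivAt (fun s => (q s).imK) p.imK t := imKCLM.hasFDerivAt.comp_hasDerivAt t h

lemma hd_congr {f : ℝ → ℝ} {v w t : ℝ} (h : HasDerivAt f v t) (e : w = v) :
    HasDerivAt f w t := e ▸ h

lemma hasDerivAt_vec3 {f0 f1 f2 : ℝ → ℝ} {d0 d1 d2 t : ℝ}
    (h0 : HasDerivAt f0 d0 t) (h1 : HasDerivAt f1 d1 t) (h2 : HasDerivAt f2 d2 t) :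
    HasDerivAt (fun s => vec3 (f0 s) (f1 s) (f2 s)) (vec3 d0 d1 d2) t := by
  have h : HasDerivAt (fun s => (fun i : Fin 3 => ![f0 s, f1 s, f2 s] i))
      (![d0, d1, d2] : Fin 3 → ℝ) t := by
    rw [hasDerivAt_pi]
    intro i
    fin_cases i
    · simpa using h0
    · simpa using h1
    · simpa using h2
  exact ((EuclideanSpace.equiv (Fin 3) ℝ).symm :
    (Fin 3 → ℝ) →L[ℝ] EuclideanSpace ℝ (Fin 3)).hasFDerivAt.comp_hasDerivAt t h

lemma eucl_norm_sq (x : EuclideanSpace ℝ (Fin 3)) : ‖x‖ ^ 2 = x 0 ^ 2 + x 1 ^ 2 + x 2 ^ 2 := by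
  rw [EuclideanSpace.norm_eq, Real.sq_sqrt (by positivity)]
  simp [Fin.sum_univ_three, Real.norm_eq_abs, sq_abs]

lemma eucl_norm (x : EuclideanSpace ℝ (Fin 3)) :
    ‖x‖ = Real.sqrt (x 0 ^ 2 + x 1 ^ 2 + x 2 ^ 2) := by
  rw [EuclideanSpace.norm_eq]
  simp [Fin.sum_univ_three, Real.norm_eq_abs, sq_abs]

lemma eucl_inner (x y : EuclideanSpace ℝ (Fin 3)) :
    (inner ℝ x y : ℝ) = x 0 * y 0 + x 1 * y 1 + x 2 * y 2 := by
  simp [PiLp.inner_apply, RCLike.inner_apply, Fin.sum_univ_three, mul_comm]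

lemma eucl_smul (r : ℝ) (x y z : ℝ) : r • vec3 x y z = vec3 (r*x) (r*y) (r*z) := by
  ext i
  fin_cases i <;> simp [vec3, PiLp.smul_apply]

lemma cross3_vec3 (x y z u v w : ℝ) :
    cross3 (vec3 x y z) (vec3 u v w) = vec3 (y*w - z*v) (z*u - x*w) (x*v - y*u) := by
  ext i
  fin_cases i <;> simp [cross3, vec3]

/-! ### Component polynomials -/

def Np (p : ℍ[ℝ]) : ℝ := p.re^2 + p.imI^2 + p.imJ^2 + p.imK^2
def G1p (p : ℍ[ℝ]) : ℝ := p.re^2 + p.imI^2 - p.imJ^2 - p.imK^2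
def G2p (p : ℍ[ℝ]) : ℝ := 2*(p.imI*p.imJ) - 2*(p.re*p.imK)
def G3p (p : ℍ[ℝ]) : ℝ := 2*(p.re*p.imJ) + 2*(p.imI*p.imK)
def H1p (p : ℍ[ℝ]) : ℝ := 2*(p.re*p.imK) + 2*(p.imI*p.imJ)
def H2p (p : ℍ[ℝ]) : ℝ := p.re^2 - p.imI^2 + p.imJ^2 - p.imK^2
def H3p (p : ℍ[ℝ]) : ℝ := 2*(p.imJ*p.imK) - 2*(p.re*p.imI)

lemma norm_sq_quat (p : ℍ[ℝ]) : ‖p‖^2 = Np p := by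
  rw [sq, ← Quaternion.normSq_eq_norm_mul_self, Quaternion.normSq_def']
  rfl

lemma imPart_I (p : ℍ[ℝ]) :
    imPart (star p * qI * p) = vec3 (G1p p) (G2p p) (G3p p) := by
  ext i
  fin_cases i <;>
    · simp [imPart, vec3, G1p, G2p, G3p, Quaternion.imI_mul, Quaternion.imJ_mul,
        Quaternion.imK_mul, Quaternion.re_mul]
      ring

lemma imPart_J (p : ℍ[ℝ]) :
    imPart (star p * qJ * p) = vec3 (H1p p) (H2p p) (H3p p) := by
  ext i
  fin_cases i <;>
    · simp [imPart, vec3, H1p, H2p, H3p, Quaternion.imI_mul, Quaternion.imJ_mul,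
        Quaternion.imK_mul, Quaternion.re_mul]
      ring

/-! ### The core algebraic identity -/

set_option maxHeartbeats 1000000 in
lemma abstract_energy {n n' g1 g2 g3 g1' g2' g3' h1 h2 h3 h1' h2' h3' m : ℝ}
    (hn : n ≠ 0)
    (hg : g1^2 + g2^2 + g3^2 = n^2)
    (hgg : g1*g1' + g2*g2' + g3*g3' = n*n')
    (hmain : n^4*(g1'^2 + g2'^2 + g3'^2)
        + (h1'*(g2*h3 - g3*h2) + h2'*(g3*h1 - g1*h3) + h3'*(g1*h2 - g2*h1))^2
      = 4*m*n^5) :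
    ((n⁻¹ * (n⁻¹*g1' - n'/n^2*g1))^2 + (n⁻¹ * (n⁻¹*g2' - n'/n^2*g2))^2
        + (n⁻¹ * (n⁻¹*g3' - n'/n^2*g3))^2
      + (n⁻¹ * (n⁻¹*h1' - n'/n^2*h1) * ((n⁻¹*g2)*(n⁻¹*h3) - (n⁻¹*g3)*(n⁻¹*h2))
          + n⁻¹ * (n⁻¹*h2' - n'/n^2*h2) * ((n⁻¹*g3)*(n⁻¹*h1) - (n⁻¹*g1)*(n⁻¹*h3))
          + n⁻¹ * (n⁻¹*h3' - n'/n^2*h3) * ((n⁻¹*g1)*(n⁻¹*h2) - (n⁻¹*g2)*(n⁻¹*h1)))^2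
      + (n⁻¹ * (n⁻¹*n'))^2) * n^3 = 4*m := by
  have hK : (n⁻¹ * (n⁻¹*g1' - n'/n^2*g1))^2 + (n⁻¹ * (n⁻¹*g2' - n'/n^2*g2))^2
        + (n⁻¹ * (n⁻¹*g3' - n'/n^2*g3))^2
      = ((n*g1' - n'*g1)^2 + (n*g2' - n'*g2)^2 + (n*g3' - n'*g3)^2)/n^6 := by
    field_simp
  have hkey : (n*g1' - n'*g1)^2 + (n*g2' - n'*g2)^2 + (n*g3' - n'*g3)^2
      = n^2*(g1'^2 + g2'^2 + g3'^2) - n^2*n'^2 := by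
    linear_combination (-2*n*n')*hgg + n'^2*hg
  have hT : n⁻¹ * (n⁻¹*h1' - n'/n^2*h1) * ((n⁻¹*g2)*(n⁻¹*h3) - (n⁻¹*g3)*(n⁻¹*h2))
          + n⁻¹ * (n⁻¹*h2' - n'/n^2*h2) * ((n⁻¹*g3)*(n⁻¹*h1) - (n⁻¹*g1)*(n⁻¹*h3))
          + n⁻¹ * (n⁻¹*h3' - n'/n^2*h3) * ((n⁻¹*g1)*(n⁻¹*h2) - (n⁻¹*g2)*(n⁻¹*h1))
      = (h1'*(g2*h3 - g3*h2) + h2'*(g3*h1 - g1*h3) + h3'*(g1*h2 - g2*h1))/n^4 := by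
    field_simp
    ring
  have hS : (h1'*(g2*h3 - g3*h2) + h2'*(g3*h1 - g1*h3) + h3'*(g1*h2 - g2*h1))^2
      = 4*m*n^5 - n^4*(g1'^2 + g2'^2 + g3'^2) := by linear_combination hmain
  rw [hK, hkey, hT, div_pow, hS]
  field_simp
  ring

/-! ### The pointwise identity -/

set_option maxHeartbeats 2000000 in
lemma key_pointwise (q : ℝ → ℍ[ℝ]) (hq : ContDiff ℝ (⊤ : ℕ∞) q) (h0 : ∀ t, q t ≠ 0) (t : ℝ) :
    (kappa q t ^ 2 + twistRate q t ^ 2 + stretchRate q t ^ 2) * speed q t ^ 3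
      = 4 * ‖deriv q t‖ ^ 2 := by
  have hdiff : Differentiable ℝ q := hq.differentiable (by simp)
  have hNpos : ∀ s, 0 < Np (q s) := by
    intro s
    rw [← norm_sq_quat]
    exact pow_pos (norm_pos_iff.mpr (h0 s)) 2
  have hNne : ∀ s, Np (q s) ≠ 0 := fun s => (hNpos s).ne'
  -- function-level identities
  have hGamma : gammaDeriv q = fun s => vec3 (G1p (q s)) (G2p (q s)) (G3p (q s)) :=
    funext fun s => imPart_I (q s)
  have hSpeed : speed q = fun s => Np (q s) := by
    funext s
    show ‖gammaDeriv q s‖ = Np (q s)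
    rw [show gammaDeriv q s = vec3 (G1p (q s)) (G2p (q s)) (G3p (q s)) from imPart_I (q s),
      eucl_norm]
    simp only [vec3_zero, vec3_one, vec3_two]
    rw [show G1p (q s)^2 + G2p (q s)^2 + G3p (q s)^2 = Np (q s)^2 by
      simp only [G1p, G2p, G3p, Np]; ring]
    exact Real.sqrt_sq (hNpos s).le
  have hDs : dsGamma q = fun s =>
      vec3 ((Np (q s))⁻¹ * G1p (q s)) ((Np (q s))⁻¹ * G2p (q s)) ((Np (q s))⁻¹ * G3p (q s)) := by
    funext s
    show (speed q s)⁻¹ • gammaDeriv q s = _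
    simp only [hSpeed, hGamma]
    exact eucl_smul _ _ _ _
  have hV : frameV q = fun s =>
      vec3 ((Np (q s))⁻¹ * H1p (q s)) ((Np (q s))⁻¹ * H2p (q s)) ((Np (q s))⁻¹ * H3p (q s)) := by
    funext s
    show (‖q s‖ ^ 2)⁻¹ • imPart (star (q s) * qJ * q s) = _
    rw [norm_sq_quat, imPart_J]
    exact eucl_smul _ _ _ _
  -- derivatives of components at t
  have hx : HasDerivAt q (deriv q t) t := (hdiff t).hasDerivAt
  have ha := hasDerivAt_re hx
  have hb := hasDerivAt_imI hx
  have hc := hasDerivAt_imJ hx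
  have hd := hasDerivAt_imK hx
  have hNd : HasDerivAt (fun s => Np (q s))
      (2*((q t).re*(deriv q t).re) + 2*((q t).imI*(deriv q t).imI)
        + 2*((q t).imJ*(deriv q t).imJ) + 2*((q t).imK*(deriv q t).imK)) t :=
    hd_congr (((ha.pow 2).add (hb.pow 2) |>.add (hc.pow 2)).add (hd.pow 2))
      (by push_cast; ring)
  have hG1d : HasDerivAt (fun s => G1p (q s))
      (2*((q t).re*(deriv q t).re) + 2*((q t).imI*(deriv q t).imI)
        - 2*((q t).imJ*(deriv q t).imJ) - 2*((q t).imK*(deriv q t).imK)) t :=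
    hd_congr (((ha.pow 2).add (hb.pow 2) |>.sub (hc.pow 2)).sub (hd.pow 2))
      (by push_cast; ring)
  have hG2d : HasDerivAt (fun s => G2p (q s))
      (2*((deriv q t).imI*(q t).imJ + (q t).imI*(deriv q t).imJ)
        - 2*((deriv q t).re*(q t).imK + (q t).re*(deriv q t).imK)) t :=
    hd_congr (((hb.mul hc).const_mul 2).sub ((ha.mul hd).const_mul 2)) (by ring)
  have hG3d : HasDerivAt (fun s => G3p (q s))
      (2*((deriv q t).re*(q t).imJ + (q t).re*(deriv q t).imJ)
        + 2*((deriv q t).imI*(q t).imK + (q t).imI*(deriv q t).imK)) t :=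
    hd_congr (((ha.mul hc).const_mul 2).add ((hb.mul hd).const_mul 2)) (by ring)
  have hH1d : HasDerivAt (fun s => H1p (q s))
      (2*((deriv q t).re*(q t).imK + (q t).re*(deriv q t).imK)
        + 2*((deriv q t).imI*(q t).imJ + (q t).imI*(deriv q t).imJ)) t :=
    hd_congr (((ha.mul hd).const_mul 2).add ((hb.mul hc).const_mul 2)) (by ring)
  have hH2d : HasDerivAt (fun s => H2p (q s))
      (2*((q t).re*(deriv q t).re) - 2*((q t).imI*(deriv q t).imI)
        + 2*((q t).imJ*(deriv q t).imJ) - 2*((q t).imK*(deriv q t).imK)) t :=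
    hd_congr (((ha.pow 2).sub (hb.pow 2) |>.add (hc.pow 2)).sub (hd.pow 2))
      (by push_cast; ring)
  have hH3d : HasDerivAt (fun s => H3p (q s))
      (2*((deriv q t).imJ*(q t).imK + (q t).imJ*(deriv q t).imK)
        - 2*((deriv q t).re*(q t).imI + (q t).re*(deriv q t).imI)) t :=
    hd_congr (((hc.mul hd).const_mul 2).sub ((ha.mul hb).const_mul 2)) (by ring)
  set A := (deriv q t).re
  set B := (deriv q t).imI
  set C := (deriv q t).imJ
  set D := (deriv q t).imK
  set n' := 2*((q t).re*A) + 2*((q t).imI*B) + 2*((q t).imJ*C) + 2*((q t).imK*D) with hn'def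
  set g1' := 2*((q t).re*A) + 2*((q t).imI*B) - 2*((q t).imJ*C) - 2*((q t).imK*D) with hg1'def
  set g2' := 2*(B*(q t).imJ + (q t).imI*C) - 2*(A*(q t).imK + (q t).re*D) with hg2'def
  set g3' := 2*(A*(q t).imJ + (q t).re*C) + 2*(B*(q t).imK + (q t).imI*D) with hg3'def
  set h1' := 2*(A*(q t).imK + (q t).re*D) + 2*(B*(q t).imJ + (q t).imI*C) with hh1'def
  set h2' := 2*((q t).re*A) - 2*((q t).imI*B) + 2*((q t).imJ*C) - 2*((q t).imK*D) with hh2'def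
  set h3' := 2*(C*(q t).imK + (q t).imJ*D) - 2*(A*(q t).imI + (q t).re*B) with hh3'def
  -- derivatives of the normalized components at t
  have hd1 : HasDerivAt (fun s => (Np (q s))⁻¹ * G1p (q s))
      ((Np (q t))⁻¹ * g1' - n'/(Np (q t))^2 * G1p (q t)) t :=
    hd_congr ((hNd.inv (hNne t)).mul hG1d) (by simp only [Pi.inv_apply]; ring)
  have hd2 : HasDerivAt (fun s => (Np (q s))⁻¹ * G2p (q s))
      ((Np (q t))⁻¹ * g2' - n'/(Np (q t))^2 * G2p (q t)) t :=
    hd_congr ((hNd.inv (hNne t)).mul hG2d) (by simp only [Pi.inv_apply]; ring)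
  have hd3 : HasDerivAt (fun s => (Np (q s))⁻¹ * G3p (q s))
      ((Np (q t))⁻¹ * g3' - n'/(Np (q t))^2 * G3p (q t)) t :=
    hd_congr ((hNd.inv (hNne t)).mul hG3d) (by simp only [Pi.inv_apply]; ring)
  have he1 : HasDerivAt (fun s => (Np (q s))⁻¹ * H1p (q s))
      ((Np (q t))⁻¹ * h1' - n'/(Np (q t))^2 * H1p (q t)) t :=
    hd_congr ((hNd.inv (hNne t)).mul hH1d) (by simp only [Pi.inv_apply]; ring)
  have he2 : HasDerivAt (fun s => (Np (q s))⁻¹ * H2p (q s))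
      ((Np (q t))⁻¹ * h2' - n'/(Np (q t))^2 * H2p (q t)) t :=
    hd_congr ((hNd.inv (hNne t)).mul hH2d) (by simp only [Pi.inv_apply]; ring)
  have he3 : HasDerivAt (fun s => (Np (q s))⁻¹ * H3p (q s))
      ((Np (q t))⁻¹ * h3' - n'/(Np (q t))^2 * H3p (q t)) t :=
    hd_congr ((hNd.inv (hNne t)).mul hH3d) (by simp only [Pi.inv_apply]; ring)
  have hdd : deriv (dsGamma q) t = vec3
      ((Np (q t))⁻¹ * g1' - n'/(Np (q t))^2 * G1p (q t))
      ((Np (q t))⁻¹ * g2' - n'/(Np (q t))^2 * G2p (q t))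
      ((Np (q t))⁻¹ * g3' - n'/(Np (q t))^2 * G3p (q t)) := by
    rw [hDs]
    exact (hasDerivAt_vec3 hd1 hd2 hd3).deriv
  have hVd : deriv (frameV q) t = vec3
      ((Np (q t))⁻¹ * h1' - n'/(Np (q t))^2 * H1p (q t))
      ((Np (q t))⁻¹ * h2' - n'/(Np (q t))^2 * H2p (q t))
      ((Np (q t))⁻¹ * h3' - n'/(Np (q t))^2 * H3p (q t)) := by
    rw [hV]
    exact (hasDerivAt_vec3 he1 he2 he3).deriv
  have hsp : speed q t = Np (q t) := by rw [hSpeed]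
  -- the three scalar quantities
  have hkap : kappa q t ^ 2
      = ((Np (q t))⁻¹ * ((Np (q t))⁻¹ * g1' - n'/(Np (q t))^2 * G1p (q t)))^2
        + ((Np (q t))⁻¹ * ((Np (q t))⁻¹ * g2' - n'/(Np (q t))^2 * G2p (q t)))^2
        + ((Np (q t))⁻¹ * ((Np (q t))⁻¹ * g3' - n'/(Np (q t))^2 * G3p (q t)))^2 := by
    show ‖(speed q t)⁻¹ • deriv (dsGamma q) t‖^2 = _
    rw [hsp, hdd, eucl_smul, eucl_norm_sq]
    simp only [vec3_zero, vec3_one, vec3_two]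
  have hDst : dsGamma q t = vec3 ((Np (q t))⁻¹ * G1p (q t)) ((Np (q t))⁻¹ * G2p (q t))
      ((Np (q t))⁻¹ * G3p (q t)) := by rw [hDs]
  have hVt : frameV q t = vec3 ((Np (q t))⁻¹ * H1p (q t)) ((Np (q t))⁻¹ * H2p (q t))
      ((Np (q t))⁻¹ * H3p (q t)) := by rw [hV]
  have htw : twistRate q t
      = (Np (q t))⁻¹ * ((Np (q t))⁻¹ * h1' - n'/(Np (q t))^2 * H1p (q t))
          * (((Np (q t))⁻¹ * G2p (q t))*((Np (q t))⁻¹ * H3p (q t))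
            - ((Np (q t))⁻¹ * G3p (q t))*((Np (q t))⁻¹ * H2p (q t)))
        + (Np (q t))⁻¹ * ((Np (q t))⁻¹ * h2' - n'/(Np (q t))^2 * H2p (q t))
          * (((Np (q t))⁻¹ * G3p (q t))*((Np (q t))⁻¹ * H1p (q t))
            - ((Np (q t))⁻¹ * G1p (q t))*((Np (q t))⁻¹ * H3p (q t)))
        + (Np (q t))⁻¹ * ((Np (q t))⁻¹ * h3' - n'/(Np (q t))^2 * H3p (q t))
          * (((Np (q t))⁻¹ * G1p (q t))*((Np (q t))⁻¹ * H2p (q t))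
            - ((Np (q t))⁻¹ * G2p (q t))*((Np (q t))⁻¹ * H1p (q t))) := by
    show (inner ℝ ((speed q t)⁻¹ • deriv (frameV q) t)
      (cross3 (dsGamma q t) (frameV q t)) : ℝ) = _
    rw [hsp, hVd, hDst, hVt, cross3_vec3, eucl_smul, eucl_inner]
    simp only [vec3_zero, vec3_one, vec3_two]
  have hst : stretchRate q t = (Np (q t))⁻¹ * ((Np (q t))⁻¹ * n') := by
    show (speed q t)⁻¹ * ((speed q t)⁻¹ * deriv (speed q) t) = _
    rw [hsp]
    congr 2
    rw [hSpeed]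
    exact hNd.deriv
  rw [hkap, htw, hst, hsp]
  refine abstract_energy (hNne t) ?_ ?_ ?_
  · simp only [G1p, G2p, G3p, Np]; ring
  · simp only [hn'def, hg1'def, hg2'def, hg3'def, G1p, G2p, G3p, Np]; ring
  · rw [norm_sq_quat]
    simp only [hn'def, hg1'def, hg2'def, hg3'def, hh1'def, hh2'def, hh3'def,
      G1p, G2p, G3p, H1p, H2p, H3p, Np]
    ring
/-- The generalized Kirchhoff energy of the frame-Hopf framed curve of `q` over `[0,2]`,
`∫ (κ² + tw² + st²)·‖γ'‖² ds = ∫ (κ² + tw² + st²)·‖γ'‖³ dt`, equals `4·∫ |q'|² dt`. -/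
theorem generalized_energy_quaternionic
    (q : ℝ → ℍ[ℝ]) (hq : ContDiff ℝ (⊤ : ℕ∞) q) (h0 : ∀ t, q t ≠ 0) :
    (∫ t in (0:ℝ)..2,
        (kappa q t ^ 2 + twistRate q t ^ 2 + stretchRate q t ^ 2) * speed q t ^ 3)
      = 4 * ∫ t in (0:ℝ)..2, ‖deriv q t‖ ^ 2 := by
  rw [intervalIntegral.integral_congr (g := fun s => 4 * ‖deriv q s‖ ^ 2)
      (fun s _ => key_pointwise q hq h0 s),
    intervalIntegral.integral_const_mul]
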